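/- arXiv:2205.14211 — 2 statements merged into one kernel-verified Lean document; each statement's English description precedes it below -/
import Mathlib

section
/- (Lemma 4.1, error propagation for the non-stationary policy) For every realization of the samples and every k ∈ {1,…,K}: 0 ≤ V* − V^{π'_k} ≤ Γ_k, where Γ_k := (1/A_∞)·Σ_{j=0}^{k−1} γ^j (π_k P_{k−j}^{k−1} − π_* P_*^j) E_{k−j} + 2H(α^k + A_{γ,k}/A_∞)·1. -/
open MeasureTheory ProbabilityTheory Finset Real

noncomputable section

/-- The transition kernel `P` applied to a state-value function:
`(Pv)(x,a) = Σ_z P(z|x,a) v(z)`. -/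
def mdpP {S A : Type} [Fintype S] (P : S → A → S → ℝ) (v : S → ℝ) : S → A → ℝ :=
  fun x a => ∑ z, P x a z * v z

/-- A policy applied to a Q-function: `(poq)(x) = Σ_a po(a|x) q(x,a)`. -/
def polAct {S A : Type} [Fintype A] (po : S → A → ℝ) (q : S → A → ℝ) : S → ℝ :=
  fun x => ∑ a, po x a * q x a

/-- `P` is a transition kernel. -/
def IsKernel {S A : Type} [Fintype S] (P : S → A → S → ℝ) : Prop :=
  (∀ x a z, 0 ≤ P x a z) ∧ ∀ x a, ∑ z, P x a z = 1

/-- `po` is a (Markov) policy. -/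
def IsPolicy {S A : Type} [Fintype A] (po : S → A → ℝ) : Prop :=
  (∀ x a, 0 ≤ po x a) ∧ ∀ x, ∑ a, po x a = 1

/-- The deterministic policy induced by `d : S → A`. -/
def detPol {S A : Type} [DecidableEq A] (d : S → A) : S → A → ℝ :=
  fun x a => if a = d x then 1 else 0

/-- The Bellman operator `T^po q = r + γ P (po q)`. -/
def bellmanOp {S A : Type} [Fintype S] [Fintype A] (P : S → A → S → ℝ) (r : S → A → ℝ)
    (γ : ℝ) (po : S → A → ℝ) (qf : S → A → ℝ) : S → A → ℝ :=
  fun x a => r x a + γ * mdpP P (polAct po qf) x a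

/-- `P^po = Ppo` acting on Q-functions. -/
def Ppi {S A : Type} [Fintype S] [Fintype A] (P : S → A → S → ℝ) (po : S → A → ℝ)
    (qf : S → A → ℝ) : S → A → ℝ :=
  mdpP P (polAct po qf)

/-- `PprodN P po j n` is `P^{po_{j+n-1}} ⋯ P^{po_j}` (`n` factors, identity for `n = 0`);
this is `P_j^i` of the paper with `n = i + 1 - j` factors. -/
def PprodN {S A : Type} [Fintype S] [Fintype A] (P : S → A → S → ℝ)
    (po : ℕ → S → A → ℝ) (j : ℕ) : ℕ → (S → A → ℝ) → S → A → ℝ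
  | 0, qf => qf
  | n + 1, qf => Ppi P (po (j + n)) (PprodN P po j n qf)

/-- The conditional standard deviation `σ(v)(x,a) = √(P(v²)(x,a) − (Pv)(x,a)²)`. -/
def sigmaP {S A : Type} [Fintype S] (P : S → A → S → ℝ) (v : S → ℝ) : S → A → ℝ :=
  fun x a => Real.sqrt (mdpP P (fun z => v z ^ 2) x a - (mdpP P v x a) ^ 2)

/-- `𝒩^po = Σ_{t=0}^∞ (γ po P)^t` acting on state-value functions. -/
def Npol {S A : Type} [Fintype S] [Fintype A] (P : S → A → S → ℝ) (γ : ℝ)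
    (po : S → A → ℝ) (vf : S → ℝ) : S → ℝ :=
  fun x => ∑' t : ℕ, ((fun uf : S → ℝ => fun z => γ * polAct po (mdpP P uf) z)^[t] vf) x

/-!
Write `A_k = Σ_{j<k} α^j`. Unrolling the recursion of MDVI gives
`s_{k+1} = A_{k+1} r + γ P w_k + E_{k+1}` with `w_k = π_k s_k ≥ π* s_k`. Against this, the exact
sequences `A_{k+1} Q* = A_{k+1} (r + γ P π* Q*)` and
`A_{k+1} u_k = A_{k+1} (r + γ P π_k u_{k-1})` differ from `s_{k+1}` by `γ P π` (with `π = π*`,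
resp. `π_k`) applied to the previous difference, plus `α^k` times a value of size at most `H`. By induction the two gaps
`A_k Q* - s_k` and `s_k - A_k u_{k-1}` are bounded by the propagated errors plus `H A_{γ,k}`.
Applying `π*`, resp. `π_k`, and the greedy inequality `π* s_k ≤ π_k s_k` bounds
`A_k (V* - V^{π'_k})`; then `(1 - α) A_k = 1 - α^k` and `V* - V^{π'_k} ≤ 2H` give the claim.
The lower bound holds because every Bellman iterate starting from `Q^{π_0}` stays below `Q*`.
-/

section Kernel

variable {S A : Type} [Fintype S] (P : S → A → S → ℝ)

lemma mdpP_add (f g : S → ℝ) : mdpP P (f + g) = mdpP P f + mdpP P g := by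
  ext x a; simp [mdpP, mul_add, sum_add_distrib]

lemma mdpP_sub (f g : S → ℝ) : mdpP P (f - g) = mdpP P f - mdpP P g := by
  ext x a; simp [mdpP, mul_sub, sum_sub_distrib]

lemma mdpP_smul (c : ℝ) (f : S → ℝ) : mdpP P (c • f) = c • mdpP P f := by
  ext x a; simp [mdpP, mul_sum, mul_left_comm]

lemma mdpP_sum {ι : Type*} (s : Finset ι) (f : ι → S → ℝ) :
    mdpP P (∑ i ∈ s, f i) = ∑ i ∈ s, mdpP P (f i) := by
  ext x a; simp [mdpP, mul_sum, sum_comm (s := univ)]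

variable {P}

lemma mdpP_mono (hP : IsKernel P) : Monotone (mdpP P) := fun _ _ h x a =>
  sum_le_sum fun z _ => mul_le_mul_of_nonneg_left (h z) (hP.1 x a z)

lemma mdpP_const (hP : IsKernel P) (c : ℝ) : mdpP P (fun _ => c) = fun _ _ => c := by
  ext x a; simp [mdpP, ← sum_mul, hP.2 x a]

lemma mdpP_le_const (hP : IsKernel P) {f : S → ℝ} {c : ℝ} (h : f ≤ fun _ => c) :
    mdpP P f ≤ fun _ _ => c :=
  (mdpP_mono hP h).trans_eq (mdpP_const hP c)

lemma const_le_mdpP (hP : IsKernel P) {f : S → ℝ} {c : ℝ} (h : (fun _ => c) ≤ f) :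
    (fun _ _ => c) ≤ mdpP P f :=
  (mdpP_const hP c).symm.trans_le (mdpP_mono hP h)

end Kernel

section Policy

variable {S A : Type} [Fintype A] (po : S → A → ℝ)

lemma polAct_add (f g : S → A → ℝ) : polAct po (f + g) = polAct po f + polAct po g := by
  ext x; simp [polAct, mul_add, sum_add_distrib]

lemma polAct_sub (f g : S → A → ℝ) : polAct po (f - g) = polAct po f - polAct po g := by
  ext x; simp [polAct, mul_sub, sum_sub_distrib]

lemma polAct_smul (c : ℝ) (f : S → A → ℝ) : polAct po (c • f) = c • polAct po f := by
  ext x; simp [polAct, mul_sum, mul_left_comm]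

lemma polAct_sum {ι : Type*} (s : Finset ι) (f : ι → S → A → ℝ) :
    polAct po (∑ i ∈ s, f i) = ∑ i ∈ s, polAct po (f i) := by
  ext x; simp [polAct, mul_sum, sum_comm (s := univ)]

variable {po}

lemma polAct_mono (hpo : IsPolicy po) : Monotone (polAct po) := fun _ _ h x =>
  sum_le_sum fun a _ => mul_le_mul_of_nonneg_left (h x a) (hpo.1 x a)

lemma polAct_const (hpo : IsPolicy po) (c : ℝ) : polAct po (fun _ _ => c) = fun _ => c := by
  ext x; simp [polAct, ← sum_mul, hpo.2 x]

lemma polAct_le (hpo : IsPolicy po) {f : S → A → ℝ} {g : S → ℝ} (h : ∀ x a, f x a ≤ g x) :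
    polAct po f ≤ g := fun x =>
  (polAct_mono hpo (fun y a => h y a) x).trans_eq (congrFun (polAct_const hpo (g x)) x)

lemma le_polAct (hpo : IsPolicy po) {f : S → A → ℝ} {g : S → ℝ} (h : ∀ x a, g x ≤ f x a) :
    g ≤ polAct po f := fun x =>
  (congrFun (polAct_const hpo (g x)) x).symm.trans_le (polAct_mono hpo (fun y a => h y a) x)

lemma isPolicy_detPol [DecidableEq A] (d : S → A) : IsPolicy (detPol d) :=
  ⟨fun x a => by unfold detPol; split_ifs <;> norm_num, fun x => by simp [detPol]⟩

lemma polAct_detPol [DecidableEq A] (d : S → A) (q : S → A → ℝ) (x : S) :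
    polAct (detPol d) q x = q x (d x) := by
  simp [polAct, detPol]

end Policy

section Transition

variable {S A : Type} [Fintype S] [Fintype A] (P : S → A → S → ℝ) (po : S → A → ℝ)

lemma Ppi_sub (f g : S → A → ℝ) : Ppi P po (f - g) = Ppi P po f - Ppi P po g := by
  simp only [Ppi, polAct_sub, mdpP_sub]

lemma Ppi_smul (c : ℝ) (f : S → A → ℝ) : Ppi P po (c • f) = c • Ppi P po f := by
  simp only [Ppi, polAct_smul, mdpP_smul]

lemma Ppi_sum {ι : Type*} (s : Finset ι) (f : ι → S → A → ℝ) :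
    Ppi P po (∑ i ∈ s, f i) = ∑ i ∈ s, Ppi P po (f i) := by
  simp only [Ppi, polAct_sum, mdpP_sum]

lemma PprodN_const (j n : ℕ) : PprodN P (fun _ => po) j n = (Ppi P po)^[n] := by
  induction n with
  | zero => rfl
  | succ n ih => ext f : 1; rw [Function.iterate_succ_apply', ← ih]; rfl

end Transition

section Bellman

variable {S A : Type} [Fintype S] [Fintype A] {P : S → A → S → ℝ} {r : S → A → ℝ} {γ : ℝ}
  {po : S → A → ℝ}

lemma bellmanOp_eq (P : S → A → S → ℝ) (r : S → A → ℝ) (γ : ℝ) (po q : S → A → ℝ) :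
    bellmanOp P r γ po q = r + γ • Ppi P po q := rfl

lemma bellmanOp_le_bellmanOp (hP : IsKernel P) (hγ0 : 0 ≤ γ) {po' q q' : S → A → ℝ}
    (h : polAct po q ≤ polAct po' q') : bellmanOp P r γ po q ≤ bellmanOp P r γ po' q' :=
  fun x a => add_le_add_right (mul_le_mul_of_nonneg_left (mdpP_mono hP h x a) hγ0) _

variable (hP : IsKernel P) (hpo : IsPolicy po) (hγ0 : 0 ≤ γ) (hγ1 : γ < 1)
include hP hpo hγ0 hγ1

lemma nonpos_of_le_smul_Ppi {f : S → A → ℝ} (hf : f ≤ γ • Ppi P po f) : f ≤ 0 := by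
  intro x a
  have : Nonempty (S × A) := ⟨(x, a)⟩
  obtain ⟨⟨x₀, a₀⟩, hmax⟩ := Finite.exists_max fun p : S × A => f p.1 p.2
  have hPf : Ppi P po f ≤ fun _ _ => f x₀ a₀ :=
    mdpP_le_const hP (polAct_le hpo fun y b => hmax (y, b))
  have hle : f x₀ a₀ ≤ γ * f x₀ a₀ :=
    (hf x₀ a₀).trans (mul_le_mul_of_nonneg_left (hPf x₀ a₀) hγ0)
  have hmax_nonpos : f x₀ a₀ ≤ 0 := by nlinarith
  exact (hmax (x, a)).trans hmax_nonpos

lemma le_of_le_bellmanOp {Q q : S → A → ℝ} (hQ : bellmanOp P r γ po Q = Q)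
    (hq : q ≤ bellmanOp P r γ po q) : q ≤ Q := by
  refine sub_nonpos.mp (nonpos_of_le_smul_Ppi hP hpo hγ0 hγ1 ?_)
  calc q - Q ≤ bellmanOp P r γ po q - bellmanOp P r γ po Q := sub_le_sub hq hQ.le
    _ = γ • Ppi P po (q - Q) := by rw [bellmanOp_eq, bellmanOp_eq, Ppi_sub]; module

lemma le_of_bellmanOp_le {Q q : S → A → ℝ} (hQ : bellmanOp P r γ po Q = Q)
    (hq : bellmanOp P r γ po q ≤ q) : Q ≤ q := by
  refine sub_nonpos.mp (nonpos_of_le_smul_Ppi hP hpo hγ0 hγ1 ?_)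
  calc Q - q ≤ bellmanOp P r γ po Q - bellmanOp P r γ po q := sub_le_sub hQ.ge hq
    _ = γ • Ppi P po (Q - q) := by rw [bellmanOp_eq, bellmanOp_eq, Ppi_sub]; module

end Bellman

section Bounds

variable {S A : Type} [Fintype S] [Fintype A] {P : S → A → S → ℝ} {r : S → A → ℝ} {γ H : ℝ}
  {po : S → A → ℝ}

lemma abs_bellmanOp_le (hP : IsKernel P) (hpo : IsPolicy po) (hγ0 : 0 ≤ γ)
    (hr : ∀ x a, |r x a| ≤ 1) (hH : 1 + γ * H = H) {q : S → A → ℝ} (hq : ∀ x a, |q x a| ≤ H) :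
    ∀ x a, |bellmanOp P r γ po q x a| ≤ H := by
  intro x a
  have hPq : |Ppi P po q x a| ≤ H := by
    refine abs_le.2 ⟨?_, ?_⟩
    · exact const_le_mdpP hP (le_polAct hpo fun y b => (abs_le.1 (hq y b)).1) x a
    · exact mdpP_le_const hP (polAct_le hpo fun y b => (abs_le.1 (hq y b)).2) x a
  calc |r x a + γ * Ppi P po q x a| ≤ |r x a| + γ * |Ppi P po q x a| := by
        simpa [abs_mul, abs_of_nonneg hγ0] using abs_add_le (r x a) (γ * Ppi P po q x a)
    _ ≤ 1 + γ * H := add_le_add (hr x a) (mul_le_mul_of_nonneg_left hPq hγ0)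
    _ = H := hH

lemma abs_le_of_bellmanOp_eq (hP : IsKernel P) (hpo : IsPolicy po) (hγ0 : 0 ≤ γ) (hγ1 : γ < 1)
    (hr : ∀ x a, |r x a| ≤ 1) (hH : 1 + γ * H = H) {Q : S → A → ℝ}
    (hQ : bellmanOp P r γ po Q = Q) : ∀ x a, |Q x a| ≤ H := by
  have hH0 : 0 ≤ H := by nlinarith
  have hconst (c : ℝ) (hc : |c| = H) : ∀ x a, |bellmanOp P r γ po (fun _ _ => c) x a| ≤ H :=
    abs_bellmanOp_le hP hpo hγ0 hr hH fun _ _ => hc.le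
  intro x a
  refine abs_le.2 ⟨?_, ?_⟩
  · refine le_of_le_bellmanOp hP hpo hγ0 hγ1 hQ (q := fun _ _ => -H) (fun y b => ?_) x a
    exact (abs_le.1 (hconst (-H) (by simp [hH0]) y b)).1
  · refine le_of_bellmanOp_le hP hpo hγ0 hγ1 hQ (q := fun _ _ => H) (fun y b => ?_) x a
    exact (abs_le.1 (hconst H (abs_of_nonneg hH0) y b)).2

lemma abs_le_of_bellmanOp_iterate {ρ : ℕ → S → A → ℝ} {q : ℕ → S → A → ℝ} (hP : IsKernel P)
    (hρ : ∀ k, IsPolicy (ρ k)) (hγ0 : 0 ≤ γ) (hr : ∀ x a, |r x a| ≤ 1) (hH : 1 + γ * H = H)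
    (hq : ∀ k, bellmanOp P r γ (ρ k) (q k) = q (k + 1)) (hq0 : ∀ x a, |q 0 x a| ≤ H) :
    ∀ k x a, |q k x a| ≤ H
  | 0 => hq0
  | k + 1 => hq k ▸ abs_bellmanOp_le hP (hρ k) hγ0 hr hH
      (abs_le_of_bellmanOp_iterate hP hρ hγ0 hr hH hq hq0 k)

end Bounds

section Optimality

variable {S A : Type} [Fintype S] [Fintype A] {P : S → A → S → ℝ} {r : S → A → ℝ} {γ : ℝ}
  {Qpol : (S → A → ℝ) → S → A → ℝ} {pstar : S → A → ℝ}
  (hP : IsKernel P) (hγ0 : 0 ≤ γ) (hγ1 : γ < 1)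
  (hQ : ∀ po, IsPolicy po → bellmanOp P r γ po (Qpol po) = Qpol po) (hpstar : IsPolicy pstar)
  (hopt : ∀ po, IsPolicy po → ∀ x, polAct po (Qpol po) x ≤ polAct pstar (Qpol pstar) x)
include hP hγ0 hγ1 hQ hpstar hopt

/-- The greedy policy `d` for `Q*` satisfies `Q* ≤ T^d Q*`, hence `Q* ≤ Q^d`, and
`Q*(x, d x) ≤ Q^d(x, d x) = V^d(x) ≤ V*(x)`. -/
lemma qstar_le_vstar (x : S) (b : A) : Qpol pstar x b ≤ polAct pstar (Qpol pstar) x := by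
  classical
  have : Nonempty A := ⟨b⟩
  choose d hd using fun y => Finite.exists_max (Qpol pstar y)
  have hd_pol := isPolicy_detPol d
  have hle : Qpol pstar ≤ Qpol (detPol d) := by
    refine le_of_le_bellmanOp hP hd_pol hγ0 hγ1 (hQ _ hd_pol) ?_
    calc Qpol pstar = bellmanOp P r γ pstar (Qpol pstar) := (hQ _ hpstar).symm
      _ ≤ bellmanOp P r γ (detPol d) (Qpol pstar) :=
        bellmanOp_le_bellmanOp hP hγ0 <| polAct_le hpstar fun y a => by
          rw [polAct_detPol]; exact hd y a
  calc Qpol pstar x b ≤ Qpol pstar x (d x) := hd x b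
    _ ≤ Qpol (detPol d) x (d x) := hle x (d x)
    _ = polAct (detPol d) (Qpol (detPol d)) x := (polAct_detPol d _ x).symm
    _ ≤ polAct pstar (Qpol pstar) x := hopt _ hd_pol x

lemma bellmanOp_le_qstar {po q : S → A → ℝ} (hpo : IsPolicy po) (hq : q ≤ Qpol pstar) :
    bellmanOp P r γ po q ≤ Qpol pstar := by
  refine (bellmanOp_le_bellmanOp hP hγ0 (polAct_le hpo fun x a => ?_)).trans_eq (hQ _ hpstar)
  exact (hq x a).trans (qstar_le_vstar hP hγ0 hγ1 hQ hpstar hopt x a)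

lemma qpol_le_qstar {po : S → A → ℝ} (hpo : IsPolicy po) : Qpol po ≤ Qpol pstar :=
  le_of_bellmanOp_le hP hpo hγ0 hγ1 (hQ _ hpo)
    (bellmanOp_le_qstar hP hγ0 hγ1 hQ hpstar hopt hpo le_rfl)

lemma le_qstar_of_bellmanOp_iterate {ρ : ℕ → S → A → ℝ} {q : ℕ → S → A → ℝ}
    (hρ : ∀ k, IsPolicy (ρ k)) (hq : ∀ k, bellmanOp P r γ (ρ k) (q k) = q (k + 1))
    (hq0 : q 0 ≤ Qpol pstar) : ∀ k, q k ≤ Qpol pstar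
  | 0 => hq0
  | k + 1 => hq k ▸ bellmanOp_le_qstar hP hγ0 hγ1 hQ hpstar hopt (hρ k)
      (le_qstar_of_bellmanOp_iterate hρ hq hq0 k)

end Optimality

lemma sum_range_succ_pow_sub_mul (α : ℝ) (e : ℕ → ℝ) (k : ℕ) :
    ∑ j ∈ range (k + 1), α ^ (k + 1 - 1 - j) * e j
      = e k + α * ∑ j ∈ range k, α ^ (k - 1 - j) * e j := by
  rw [sum_range_succ, add_comm, mul_sum, Nat.add_sub_cancel, Nat.sub_self, pow_zero, one_mul]
  congr 1
  refine sum_congr rfl fun j hj => ?_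
  rw [show k - j = k - 1 - j + 1 by have := mem_range.1 hj; omega, pow_succ]
  ring

lemma sum_range_succ_pow_sub_mul_pow (γ α : ℝ) (k : ℕ) :
    ∑ j ∈ range (k + 1), γ ^ (k + 1 - j) * α ^ j
      = γ * (∑ j ∈ range k, γ ^ (k - j) * α ^ j + α ^ k) := by
  rw [sum_range_succ, mul_add, mul_sum, Nat.add_sub_cancel_left, pow_one]
  congr 1
  refine sum_congr rfl fun j hj => ?_
  rw [show k + 1 - j = k - j + 1 by have := mem_range.1 hj; omega, pow_succ]
  ring

section MDVI

variable {S A : Type} {α : ℝ} {w : ℕ → S → ℝ} {sq : ℕ → S → A → ℝ}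

/-- At `k = 0` the term `w (0 - 1)` is `w 0 = 0`. -/
lemma mdvi_sq_eq [Fintype S] {P : S → A → S → ℝ} {r : S → A → ℝ} {γ : ℝ} {M : ℕ}
    {y : ℕ → ℕ → S → A → S} {v : ℕ → S → ℝ} {qv εf Ef : ℕ → S → A → ℝ}
    (hs0 : ∀ x a, sq 0 x a = 0) (hw0 : ∀ x, w 0 x = 0)
    (hv : ∀ k x, v k x = w k x - α * w (k - 1) x)
    (hqv : ∀ k x a, qv (k + 1) x a
      = r x a + (γ / (M : ℝ)) * ∑ m ∈ Finset.range M, v k (y k m x a))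
    (hsq : ∀ k x a, sq (k + 1) x a = qv (k + 1) x a + α * sq k x a)
    (hεf : ∀ k x a, εf (k + 1) x a
      = (γ / (M : ℝ)) * ∑ m ∈ Finset.range M, v k (y k m x a) - γ * mdpP P (v k) x a)
    (hEf : ∀ k x a, Ef k x a = ∑ j ∈ Finset.range k, α ^ (k - 1 - j) * εf (j + 1) x a)
    (k : ℕ) : sq k = (∑ j ∈ range k, α ^ j) • r + γ • mdpP P (w (k - 1)) + Ef k := by
  induction k with
  | zero =>
    ext x a
    simp [hs0, hEf, mdpP, hw0]
  | succ k ih =>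
    have hPv : mdpP P (v k) = mdpP P (w k) - α • mdpP P (w (k - 1)) := by
      rw [← mdpP_smul, ← mdpP_sub]; congr 1; ext x; exact hv k x
    ext x a
    have hE : Ef (k + 1) x a = εf (k + 1) x a + α * Ef k x a := by
      rw [hEf, hEf, sum_range_succ_pow_sub_mul α (fun j => εf (j + 1) x a)]
    have hPvx := congrFun (congrFun hPv x) a
    have ihx := congrFun (congrFun ih x) a
    simp only [Pi.add_apply, Pi.smul_apply, Pi.sub_apply, smul_eq_mul] at hPvx ihx ⊢
    rw [hsq, hqv, hE, hεf, geom_sum_succ, Nat.add_sub_cancel]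
    linear_combination α * ihx + γ * hPvx

lemma mdvi_w_eq_polAct [Fintype A] [DecidableEq A] {pol : ℕ → S → A}
    (hs0 : ∀ x a, sq 0 x a = 0) (hw0 : ∀ x, w 0 x = 0)
    (hwk : ∀ k x, w (k + 1) x = ⨆ a, sq (k + 1) x a)
    (hgreedy : ∀ k x a, sq k x a ≤ sq k x (pol k x)) (k : ℕ) :
    w k = polAct (detPol (pol k)) (sq k) := by
  ext x
  have : Nonempty A := ⟨pol k x⟩
  rw [polAct_detPol]
  cases k with
  | zero => rw [hw0, hs0]
  | succ k =>
    rw [hwk]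
    exact le_antisymm (ciSup_le (hgreedy _ x)) (le_ciSup (Finite.bddAbove_range _) _)

end MDVI

section ErrorPropagation

variable {S A : Type} [Fintype S] [Fintype A] (P : S → A → S → ℝ) (ρ : ℕ → S → A → ℝ) (γ : ℝ)
  (E : ℕ → S → A → ℝ)

/-- The paper's `Σ_{j<k} γ^j P_{k-j}^{k-1} E_{k-j}`, for the policy sequence `ρ`. -/
def propagatedError (k : ℕ) : S → A → ℝ :=
  ∑ j ∈ range k, γ ^ j • PprodN P ρ (k - j) j (E (k - j))

lemma propagatedError_zero : propagatedError P ρ γ E 0 = 0 := by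
  simp [propagatedError]

lemma propagatedError_succ (k : ℕ) :
    propagatedError P ρ γ E (k + 1)
      = E (k + 1) + γ • Ppi P (ρ k) (propagatedError P ρ γ E k) := by
  rw [propagatedError, propagatedError, sum_range_succ', Ppi_sum, Finset.smul_sum, add_comm]
  congr 1
  · simp [PprodN]
  · refine sum_congr rfl fun j hj => ?_
    have hjk : k - j + j = k := Nat.sub_add_cancel (mem_range.1 hj).le
    rw [Ppi_smul, smul_smul, ← pow_succ', Nat.add_sub_add_right, PprodN, hjk]

lemma polAct_propagatedError (po : S → A → ℝ) (k : ℕ) (x : S) :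
    polAct po (propagatedError P ρ γ E k) x =
      ∑ j ∈ range k, γ ^ j * polAct po (PprodN P ρ (k - j) j (E (k - j))) x := by
  simp [propagatedError, polAct_sum, polAct_smul]

end ErrorPropagation

section ScaledGap

variable {S A : Type} [Fintype S] [Fintype A] {P : S → A → S → ℝ} {r : S → A → ℝ} {γ α : ℝ}

lemma scaledGap_succ_eq {po : S → A → ℝ} {c d : ℝ} {q q' s' e el : S → A → ℝ} {w : S → ℝ}
    (s : S → A → ℝ) (hq : bellmanOp P r γ po q = q') (hs : s' = (c + d) • r + γ • mdpP P w + e) :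
    (c + d) • q' - s' + (e + γ • Ppi P po el) =
      γ • mdpP P (polAct po (c • q - s + el) + d • polAct po q + polAct po s - w) := by
  subst hq hs
  simp only [bellmanOp_eq, Ppi, polAct_add, polAct_sub, polAct_smul, mdpP_add, mdpP_sub,
    mdpP_smul]
  module

/-- With `σ = 1` and `q k = Q*` this bounds `A_k Q* - s_k`; with `σ = -1` and
`q k = u_{k-1}` it bounds `s_k - A_k u_{k-1}`. -/
lemma smul_scaledGap_le (hP : IsKernel P) {ρ : ℕ → S → A → ℝ} (hρ : ∀ k, IsPolicy (ρ k))
    (hγ0 : 0 ≤ γ) (hα0 : 0 ≤ α) {σ H : ℝ} {q s E : ℕ → S → A → ℝ} {w : ℕ → S → ℝ}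
    (hq : ∀ k, bellmanOp P r γ (ρ k) (q k) = q (k + 1)) (hs0 : s 0 = 0)
    (hs : ∀ k, s (k + 1) = (∑ j ∈ range (k + 1), α ^ j) • r + γ • mdpP P (w k) + E (k + 1))
    (hqH : ∀ k, σ • polAct (ρ k) (q k) ≤ fun _ => H)
    (hw : ∀ k, σ • polAct (ρ k) (s k) ≤ σ • w k) (k : ℕ) :
    σ • ((∑ j ∈ range k, α ^ j) • q k - s k + propagatedError P ρ γ E k) ≤
      fun _ _ => H * ∑ j ∈ range k, γ ^ (k - j) * α ^ j := by
  induction k with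
  | zero => intro x a; simp [hs0, propagatedError_zero]
  | succ k ih =>
    have hs' := hs k
    rw [sum_range_succ] at hs'
    rw [propagatedError_succ, sum_range_succ, scaledGap_succ_eq (s k) (hq k) hs',
      smul_comm σ γ, ← mdpP_smul]
    generalize (∑ j ∈ range k, α ^ j) • q k - s k + propagatedError P ρ γ E k = D at ih ⊢
    have inner : σ • (polAct (ρ k) D + α ^ k • polAct (ρ k) (q k) + polAct (ρ k) (s k) - w k)
        ≤ fun _ => H * ∑ j ∈ range k, γ ^ (k - j) * α ^ j + α ^ k * H := fun z => by
      have hD := polAct_le (hρ k) (fun y b => ih y b) z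
      have hqz := mul_le_mul_of_nonneg_left (hqH k z) (pow_nonneg hα0 k)
      have hwz := hw k z
      rw [polAct_smul] at hD
      simp only [Pi.add_apply, Pi.sub_apply, Pi.smul_apply, smul_eq_mul] at hD hqz hwz ⊢
      linarith
    intro x a
    rw [sum_range_succ_pow_sub_mul_pow]
    have := mul_le_mul_of_nonneg_left (mdpP_le_const hP inner x a) hγ0
    simp only [Pi.smul_apply, smul_eq_mul] at this ⊢
    linarith

end ScaledGap

lemma geomSum_mul_valueGap_le {S A : Type} [Fintype A] {pstar po : S → A → ℝ}
    (hpstar : IsPolicy pstar) (hpo : IsPolicy po) {Q u s EU EL : S → A → ℝ} {c b : ℝ}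
    (hU : c • Q - s + EU ≤ fun _ _ => b) (hL : s - c • u - EL ≤ fun _ _ => b)
    (hgreedy : polAct pstar s ≤ polAct po s) (x : S) :
    c * (polAct pstar Q x - polAct po u x) ≤ polAct po EL x - polAct pstar EU x + 2 * b := by
  have hU' := polAct_le hpstar (fun y a => hU y a) x
  have hL' := polAct_le hpo (fun y a => hL y a) x
  simp only [polAct_add, polAct_sub, polAct_smul, Pi.add_apply, Pi.sub_apply, Pi.smul_apply,
    smul_eq_mul] at hU' hL'
  linarith [hgreedy x]

lemma le_of_geomSum_mul_le {α g B C H : ℝ} (hα0 : 0 ≤ α) (hα1 : α < 1) (k : ℕ)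
    (hg : (∑ j ∈ range k, α ^ j) * g ≤ B + 2 * H * C) (hg2 : g ≤ 2 * H) :
    g ≤ 1 / (1 / (1 - α)) * B + 2 * H * (α ^ k + C / (1 / (1 - α))) := by
  have hgeom := mul_neg_geom_sum α k
  rw [one_div_one_div, div_div_eq_mul_div, div_one]
  linarith [congrArg (· * g) hgeom, mul_le_mul_of_nonneg_left hg (sub_nonneg.2 hα1.le),
    mul_le_mul_of_nonneg_left hg2 (pow_nonneg hα0 k)]

theorem mdvi_error_propagation_nonstationary_general
    (α : ℝ) (hα0 : 0 ≤ α) (hα1 : α < 1)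
    (S A : Type) [Fintype S] [Fintype A] [DecidableEq A]
    (P : S → A → S → ℝ) (hP : IsKernel P)
    (r : S → A → ℝ) (hr : ∀ x a, |r x a| ≤ 1)
    (γ H : ℝ) (hγ0 : 0 ≤ γ) (hγ1 : γ < 1) (hH : H = 1 / (1 - γ))
    (Qpol : (S → A → ℝ) → S → A → ℝ)
    (hQ : ∀ po, IsPolicy po → bellmanOp P r γ po (Qpol po) = Qpol po)
    (pstar : S → A → ℝ) (hpstar : IsPolicy pstar)
    (hopt : ∀ po, IsPolicy po → ∀ x, polAct po (Qpol po) x ≤ polAct pstar (Qpol pstar) x)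
    (K M : ℕ)
    (y : ℕ → ℕ → S → A → S)
    (w v : ℕ → S → ℝ) (sq qv : ℕ → S → A → ℝ)
    (hs0 : ∀ x a, sq 0 x a = 0) (hw0 : ∀ x, w 0 x = 0)
    (hv : ∀ k x, v k x = w k x - α * w (k - 1) x)
    (hqv : ∀ k x a, qv (k + 1) x a
      = r x a + (γ / (M : ℝ)) * ∑ m ∈ Finset.range M, v k (y k m x a))
    (hsq : ∀ k x a, sq (k + 1) x a = qv (k + 1) x a + α * sq k x a)
    (hwk : ∀ k x, w (k + 1) x = ⨆ a, sq (k + 1) x a)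
    (pol : ℕ → S → A)
    (hgreedy : ∀ k x a, sq k x a ≤ sq k x (pol k x))
    (εf Ef : ℕ → S → A → ℝ)
    (hεf : ∀ k x a, εf (k + 1) x a
      = (γ / (M : ℝ)) * ∑ m ∈ Finset.range M, v k (y k m x a) - γ * mdpP P (v k) x a)
    (hEf : ∀ k x a, Ef k x a = ∑ j ∈ Finset.range k, α ^ (k - 1 - j) * εf (j + 1) x a)
    (u : ℕ → S → A → ℝ)
    (hu0 : u 0 = Qpol (detPol (pol 0)))
    (hurec : ∀ k, u (k + 1) = bellmanOp P r γ (detPol (pol (k + 1))) (u k))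
    :
    ∀ k ∈ Finset.Icc 1 K, ∀ x,
      0 ≤ polAct pstar (Qpol pstar) x - polAct (detPol (pol k)) (u (k - 1)) x ∧
      polAct pstar (Qpol pstar) x - polAct (detPol (pol k)) (u (k - 1)) x ≤
        (1 / ((1 : ℝ) / (1 - α))) * ∑ j ∈ Finset.range k, γ ^ j *
          (polAct (detPol (pol k))
              (PprodN P (fun i => detPol (pol i)) (k - j) j (Ef (k - j))) x
            - polAct pstar ((fun qf => Ppi P pstar qf)^[j] (Ef (k - j))) x)
        + 2 * H * (α ^ k +
            (∑ j ∈ Finset.range k, γ ^ (k - j) * α ^ j) / ((1 : ℝ) / (1 - α))) := by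
  have hH' : 1 + γ * H = H := by
    rw [hH]; field_simp [(sub_pos.2 hγ1).ne']; ring
  have hpol (i : ℕ) : IsPolicy (detPol (pol i)) := isPolicy_detPol (pol i)
  -- `u (0 - 1) = u 0 = Q^{π_0}` is a fixed point of `T^{π_0}`
  have hu : ∀ k, bellmanOp P r γ (detPol (pol k)) (u (k - 1)) = u (k + 1 - 1)
    | 0 => hu0 ▸ hQ _ (hpol 0)
    | k + 1 => (hurec k).symm
  have hs (k : ℕ) := mdvi_sq_eq hs0 hw0 hv hqv hsq hεf hEf (k + 1)
  have hw := mdvi_w_eq_polAct hs0 hw0 hwk hgreedy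
  have hgr (k : ℕ) : polAct pstar (sq k) ≤ w k :=
    polAct_le hpstar fun x a => by rw [hw k, polAct_detPol]; exact hgreedy k x a
  have hVH : polAct pstar (Qpol pstar) ≤ fun _ => H := polAct_le hpstar fun x a =>
    (abs_le.1 (abs_le_of_bellmanOp_eq hP hpstar hγ0 hγ1 hr hH' (hQ _ hpstar) x a)).2
  have hub := abs_le_of_bellmanOp_iterate hP hpol hγ0 hr hH' hu
    (hu0 ▸ abs_le_of_bellmanOp_eq hP (hpol 0) hγ0 hγ1 hr hH' (hQ _ (hpol 0)))
  have hule := le_qstar_of_bellmanOp_iterate hP hγ0 hγ1 hQ hpstar hopt hpol hu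
    (hu0 ▸ qpol_le_qstar hP hγ0 hγ1 hQ hpstar hopt (hpol 0))
  have hU := smul_scaledGap_le (σ := 1) (q := fun _ => Qpol pstar) (w := w) hP (fun _ => hpstar)
    hγ0 hα0 (fun _ => hQ _ hpstar) (funext₂ hs0) hs (fun _ => by simpa using hVH)
    (fun k => by simpa using hgr k)
  have hL := smul_scaledGap_le (σ := -1) (w := w) hP hpol hγ0 hα0 hu (funext₂ hs0) hs
    (fun k x => by simpa [polAct_detPol] using neg_le.1 (abs_le.1 (hub k x (pol k x))).1)
    (fun k => by rw [hw k])
  intro k _ x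
  refine ⟨?_, le_of_geomSum_mul_le hα0 hα1 k ?_ ?_⟩
  · rw [polAct_detPol]
    linarith [hule k x (pol k x), qstar_le_vstar hP hγ0 hγ1 hQ hpstar hopt x (pol k x)]
  · have := geomSum_mul_valueGap_le hpstar (hpol k) (by simpa only [one_smul] using hU k)
      (by simpa only [neg_one_smul, neg_add, neg_sub, ← sub_eq_add_neg] using hL k)
      ((hgr k).trans_eq (hw k)) x
    rw [polAct_propagatedError, polAct_propagatedError, ← sum_sub_distrib] at this
    simp only [PprodN_const, ← mul_sub] at this
    linarith
  · rw [polAct_detPol]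
    linarith [hVH x, (abs_le.1 (hub k x (pol k x))).1]

/-- Lemma 4.1: error propagation for the non-stationary MDVI policy. -/
theorem mdvi_error_propagation_nonstationary
    (α : ℝ) (hα0 : 0 ≤ α) (hα1 : α < 1)
    (S A : Type) [Fintype S] [Fintype A] [Nonempty S] [Nonempty A] [DecidableEq A]
    (P : S → A → S → ℝ) (hP : IsKernel P)
    (r : S → A → ℝ) (hr : ∀ x a, |r x a| ≤ 1)
    (γ H : ℝ) (hγ0 : 0 ≤ γ) (hγ1 : γ < 1) (hH : H = 1 / (1 - γ))
    (Qpol : (S → A → ℝ) → S → A → ℝ)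
    (hQ : ∀ po, IsPolicy po → bellmanOp P r γ po (Qpol po) = Qpol po)
    (pstar : S → A → ℝ) (hpstar : IsPolicy pstar)
    (hopt : ∀ po, IsPolicy po → ∀ x, polAct po (Qpol po) x ≤ polAct pstar (Qpol pstar) x)
    (K M : ℕ) (hM : 1 ≤ M)
    (y : ℕ → ℕ → S → A → S)
    (w v : ℕ → S → ℝ) (sq qv : ℕ → S → A → ℝ)
    (hs0 : ∀ x a, sq 0 x a = 0) (hw0 : ∀ x, w 0 x = 0)
    (hv : ∀ k x, v k x = w k x - α * w (k - 1) x)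
    (hqv : ∀ k x a, qv (k + 1) x a
      = r x a + (γ / (M : ℝ)) * ∑ m ∈ Finset.range M, v k (y k m x a))
    (hsq : ∀ k x a, sq (k + 1) x a = qv (k + 1) x a + α * sq k x a)
    (hwk : ∀ k x, w (k + 1) x = ⨆ a, sq (k + 1) x a)
    (pol : ℕ → S → A)
    (hgreedy : ∀ k x a, sq k x a ≤ sq k x (pol k x))
    (εf Ef : ℕ → S → A → ℝ)
    (hεf : ∀ k x a, εf (k + 1) x a
      = (γ / (M : ℝ)) * ∑ m ∈ Finset.range M, v k (y k m x a) - γ * mdpP P (v k) x a)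
    (hEf : ∀ k x a, Ef k x a = ∑ j ∈ Finset.range k, α ^ (k - 1 - j) * εf (j + 1) x a)
    (u : ℕ → S → A → ℝ)
    (hu0 : u 0 = Qpol (detPol (pol 0)))
    (hurec : ∀ k, u (k + 1) = bellmanOp P r γ (detPol (pol (k + 1))) (u k))
    :
    ∀ k ∈ Finset.Icc 1 K, ∀ x,
      0 ≤ polAct pstar (Qpol pstar) x - polAct (detPol (pol k)) (u (k - 1)) x ∧
      polAct pstar (Qpol pstar) x - polAct (detPol (pol k)) (u (k - 1)) x ≤
        (1 / ((1 : ℝ) / (1 - α))) * ∑ j ∈ Finset.range k, γ ^ j *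
          (polAct (detPol (pol k))
              (PprodN P (fun i => detPol (pol i)) (k - j) j (Ef (k - j))) x
            - polAct pstar ((fun qf => Ppi P pstar qf)^[j] (Ef (k - j))) x)
        + 2 * H * (α ^ k +
            (∑ j ∈ Finset.range k, γ ^ (k - j) * α ^ j) / ((1 : ℝ) / (1 - α))) :=
  mdvi_error_propagation_nonstationary_general α hα0 hα1 S A P hP r hr γ H hγ0 hγ1 hH Qpol hQ pstar
    hpstar hopt K M y w v sq qv hs0 hw0 hv hqv hsq hwk pol hgreedy εf Ef hεf hEf u hu0 hurec
end
end

section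
/- (Lemma 4.2, Hoeffding bound on the averaged errors E_k) Let 𝓔₁ be the event that ‖E_k‖_∞ < 3H√(A_∞ι₁/M) for all k ∈ {1,…,K}, where ι₁ := log(8KXA/δ). Then P(𝓔₁ᶜ) ≤ δ/4. -/
open MeasureTheory ProbabilityTheory Finset Real

noncomputable section

/-!
`v_k` is bounded by `H` and is a function of the samples drawn before iteration `k`. Ordering
the samples `y_{j,m,x,a}` (`j < k`, `m < M`) lexicographically, `λ E_k(x,a)` becomes a sum of
increments `λ α^{k-1-j} (γ/M) (v_j(y_{j,m,x,a}) - (P v_j)(x,a))`, each a centred function of one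
fresh sample once the earlier ones are fixed. Integrating out the samples one at a time, using
independence and Hoeffding's lemma for each fresh sample, shows that `E_k(x,a)` is sub-Gaussian
with variance proxy `H² A_∞ / M`. A two-sided Chernoff bound at level `3H√(A_∞ ι₁ / M)` costs
`2e^{-ι₁} = δ / (4KXA)`, and a union bound over `k, x, a` gives `δ / 4`.
-/

lemma integrable_exp_of_le {Ω : Type*} [MeasurableSpace Ω] {μ : Measure Ω} [IsFiniteMeasure μ]
    {f : Ω → ℝ} (hf : Measurable f) {C : ℝ} (hC : ∀ ω, f ω ≤ C) :
    Integrable (fun ω => exp (f ω)) μ :=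
  (integrable_const (exp C)).mono' hf.exp.aestronglyMeasurable
    (ae_of_all _ fun ω => by simpa [abs_of_pos (exp_pos _)] using hC ω)

lemma Measurable.apply_of_countable {Ω S β : Type*} {m : MeasurableSpace Ω} [MeasurableSpace S]
    [Countable S] [MeasurableSingletonClass S] [MeasurableSpace β] {f : Ω → S → β}
    (hf : ∀ z, Measurable[m] (f · z)) {g : Ω → S} (hg : Measurable[m] g) :
    Measurable[m] fun ω => f ω (g ω) :=
  (measurable_from_prod_countable_left (f := fun p : Ω × S => f p.1 p.2) hf).comp
    (measurable_id.prodMk hg)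

section FreshSamples

variable {ι S Ω : Type*} [MeasurableSpace S] {Y : ι → Ω → S}

abbrev sampleSigma (Y : ι → Ω → S) (T : Set ι) : MeasurableSpace Ω :=
  ⨆ i ∈ T, MeasurableSpace.comap (Y i) ‹_›

lemma sampleSigma_mono {T T' : Set ι} (h : T ⊆ T') : sampleSigma Y T ≤ sampleSigma Y T' :=
  biSup_mono h

lemma measurable_sampleSigma {T : Set ι} {i : ι} (hi : i ∈ T) :
    Measurable[sampleSigma Y T] (Y i) :=
  Measurable.of_comap_le (le_iSup₂ (f := fun j (_ : j ∈ T) => MeasurableSpace.comap (Y j) _) i hi)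

lemma measurable_sum_fresh [Countable S] [MeasurableSingletonClass S] {T : ℕ → Set ι}
    (hT : Monotone T) {i : ℕ → ι} (hiT : ∀ t, i t ∈ T (t + 1)) {D : ℕ → S → Ω → ℝ}
    (hD : ∀ t z, Measurable[sampleSigma Y (T t)] (D t z)) (N : ℕ) :
    Measurable[sampleSigma Y (T N)] fun ω => ∑ t ∈ range N, D t (Y (i t) ω) ω := by
  refine Finset.measurable_sum _ fun t ht => ?_
  have hle : sampleSigma Y (T (t + 1)) ≤ sampleSigma Y (T N) :=
    sampleSigma_mono (hT (Finset.mem_range.1 ht))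
  exact Measurable.apply_of_countable
    (fun z => ((hD t z).mono (sampleSigma_mono (hT t.le_succ)) le_rfl).mono hle le_rfl)
    ((measurable_sampleSigma (hiT t)).mono hle le_rfl)

variable [MeasurableSpace Ω] {μ : Measure Ω}

lemma sampleSigma_le (hY : ∀ i, Measurable (Y i)) (T : Set ι) :
    sampleSigma Y T ≤ ‹MeasurableSpace Ω› :=
  iSup₂_le fun i _ => (hY i).comap_le

lemma indepFun_of_measurable_sampleSigma (hY : ∀ i, Measurable (Y i)) (hind : iIndepFun Y μ)
    {T : Set ι} {i₀ : ι} (hi₀ : i₀ ∉ T) {β : Type*} [MeasurableSpace β] {F : Ω → β}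
    (hF : Measurable[sampleSigma Y T] F) : IndepFun (Y i₀) F μ := by
  have hST : Disjoint {i₀} T := Set.disjoint_singleton_left.2 hi₀
  have := indep_iSup_of_disjoint (fun i => (hY i).comap_le)
    ((iIndepFun_iff_iIndep _ _ _).1 hind) hST
  rw [IndepFun_iff_Indep]
  refine indep_of_indep_of_le_right (indep_of_indep_of_le_left this ?_) hF.comap_le
  exact le_iSup₂ (f := fun j (_ : j ∈ ({i₀} : Set ι)) => MeasurableSpace.comap (Y j) _) i₀ rfl

lemma integral_map_eq_sum [Fintype S] [MeasurableSingletonClass S] [IsFiniteMeasure μ]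
    {X : Ω → S} (hX : Measurable X) {p : S → ℝ} (hp0 : ∀ z, 0 ≤ p z)
    (hp : ∀ z, μ {ω | X ω = z} = ENNReal.ofReal (p z)) (f : S → ℝ) :
    ∫ z, f z ∂μ.map X = ∑ z, p z * f z := by
  rw [integral_fintype Integrable.of_finite]
  refine Finset.sum_congr rfl fun z _ => ?_
  rw [map_measureReal_apply hX (measurableSet_singleton z), measureReal_def]
  simp [Set.preimage, hp, hp0 z]

lemma integral_indicator_mul_of_fresh [MeasurableSingletonClass S] (hY : ∀ i, Measurable (Y i))
    (hind : iIndepFun Y μ) {T : Set ι} {i₀ : ι} (hi₀ : i₀ ∉ T) {G : Ω → ℝ}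
    (hG : Measurable[sampleSigma Y T] G) (z : S) :
    ∫ ω, ({z} : Set S).indicator 1 (Y i₀ ω) * G ω ∂μ = (μ.map (Y i₀)).real {z} * ∫ ω, G ω ∂μ := by
  have hφ : Measurable (({z} : Set S).indicator (1 : S → ℝ)) :=
    measurable_const.indicator (measurableSet_singleton z)
  have hindep : IndepFun (fun ω => ({z} : Set S).indicator (1 : S → ℝ) (Y i₀ ω)) G μ :=
    (indepFun_of_measurable_sampleSigma hY hind hi₀ hG).comp hφ measurable_id
  rw [hindep.integral_fun_mul_eq_mul_integral (hφ.comp (hY i₀)).aestronglyMeasurable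
    (hG.mono (sampleSigma_le hY T) le_rfl).aestronglyMeasurable]
  congr 1
  rw [← integral_map (hY i₀).aemeasurable hφ.aestronglyMeasurable]
  exact integral_indicator_one (measurableSet_singleton z)

variable [Fintype S] [MeasurableSingletonClass S]

lemma integral_exp_add_fresh_le [IsFiniteMeasure μ] (hY : ∀ i, Measurable (Y i))
    (hind : iIndepFun Y μ) {T : Set ι} {i₀ : ι} (hi₀ : i₀ ∉ T)
    {F : Ω → ℝ} (hF : Measurable[sampleSigma Y T] F) {CF : ℝ} (hFC : ∀ ω, F ω ≤ CF)
    {D : S → Ω → ℝ} (hD : ∀ z, Measurable[sampleSigma Y T] (D z)) {CD : ℝ}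
    (hDC : ∀ z ω, D z ω ≤ CD) {b : ℝ} (hb : ∀ ω, ∫ z, exp (D z ω) ∂μ.map (Y i₀) ≤ exp b) :
    ∫ ω, exp (F ω + D (Y i₀ ω) ω) ∂μ ≤ exp b * ∫ ω, exp (F ω) ∂μ := by
  set ν := μ.map (Y i₀)
  set φ : S → S → ℝ := fun z => ({z} : Set S).indicator 1
  have hφ : ∀ z, Measurable (φ z) := fun z => measurable_of_countable _
  have hint : ∀ z, Integrable (fun ω => exp (F ω + D z ω)) μ := fun z =>
    integrable_exp_of_le ((hF.add (hD z)).mono (sampleSigma_le hY T) le_rfl)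
      fun ω => add_le_add (hFC ω) (hDC z ω)
  have hint' : ∀ z, Integrable (fun ω => φ z (Y i₀ ω) * exp (F ω + D z ω)) μ := fun z =>
    (hint z).bdd_mul (c := 1) ((hφ z).comp (hY i₀)).aestronglyMeasurable
      (ae_of_all _ fun ω => by by_cases h : Y i₀ ω = z <;> simp [φ, h])
  have hsplit : ∀ ω, exp (F ω + D (Y i₀ ω) ω) = ∑ z, φ z (Y i₀ ω) * exp (F ω + D z ω) := by
    intro ω
    rw [Finset.sum_eq_single (Y i₀ ω) (fun z _ hz => by simp [φ, Ne.symm hz]) (by simp)]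
    simp [φ]
  have hν : ∀ ω, exp (F ω) * ∫ z, exp (D z ω) ∂ν = ∑ z, ν.real {z} * exp (F ω + D z ω) := by
    intro ω
    rw [integral_fintype Integrable.of_finite, Finset.mul_sum]
    exact Finset.sum_congr rfl fun z _ => by rw [exp_add, smul_eq_mul]; ring
  calc ∫ ω, exp (F ω + D (Y i₀ ω) ω) ∂μ
      = ∑ z, ν.real {z} * ∫ ω, exp (F ω + D z ω) ∂μ := by
        simp_rw [hsplit]
        rw [integral_finsetSum _ fun z _ => hint' z]
        exact Finset.sum_congr rfl fun z _ =>
          integral_indicator_mul_of_fresh hY hind hi₀ (hF.add (hD z)).exp z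
    _ = ∫ ω, exp (F ω) * ∫ z, exp (D z ω) ∂ν ∂μ := by
        simp_rw [hν]
        rw [integral_finsetSum _ fun z _ => (hint z).const_mul _]
        simp_rw [integral_const_mul]
    _ ≤ ∫ ω, exp (F ω) * exp b ∂μ := by
        refine integral_mono_of_nonneg (ae_of_all _ fun ω => ?_) ((integrable_exp_of_le
          (hF.mono (sampleSigma_le hY T) le_rfl) hFC).mul_const _) (ae_of_all _ fun ω => ?_)
        · exact mul_nonneg (exp_pos _).le (integral_nonneg fun _ => (exp_pos _).le)
        · exact mul_le_mul_of_nonneg_left (hb ω) (exp_pos _).le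
    _ = exp b * ∫ ω, exp (F ω) ∂μ := by rw [integral_mul_const, mul_comm]

theorem integral_exp_sum_fresh_le [IsProbabilityMeasure μ] (hY : ∀ i, Measurable (Y i))
    (hind : iIndepFun Y μ) {T : ℕ → Set ι} (hT : Monotone T) {i : ℕ → ι}
    (hiT : ∀ t, i t ∈ T (t + 1)) (hiT' : ∀ t, i t ∉ T t) {D : ℕ → S → Ω → ℝ}
    (hD : ∀ t z, Measurable[sampleSigma Y (T t)] (D t z)) {C : ℕ → ℝ}
    (hDC : ∀ t z ω, D t z ω ≤ C t) {b : ℕ → ℝ}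
    (hb : ∀ t ω, ∫ z, exp (D t z ω) ∂μ.map (Y (i t)) ≤ exp (b t)) (N : ℕ) :
    ∫ ω, exp (∑ t ∈ range N, D t (Y (i t) ω) ω) ∂μ ≤ exp (∑ t ∈ range N, b t) := by
  induction N with
  | zero => simp
  | succ N ih =>
    calc ∫ ω, exp (∑ t ∈ range (N + 1), D t (Y (i t) ω) ω) ∂μ
        ≤ exp (b N) * ∫ ω, exp (∑ t ∈ range N, D t (Y (i t) ω) ω) ∂μ := by
          simp_rw [Finset.sum_range_succ]
          exact integral_exp_add_fresh_le hY hind (hiT' N) (measurable_sum_fresh hT hiT hD N)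
            (fun ω => Finset.sum_le_sum fun t _ => hDC t _ ω) (hD N) (hDC N) (hb N)
      _ ≤ exp (b N) * exp (∑ t ∈ range N, b t) := mul_le_mul_of_nonneg_left ih (exp_pos _).le
      _ = exp (∑ t ∈ range (N + 1), b t) := by rw [Finset.sum_range_succ, exp_add, mul_comm]

end FreshSamples

lemma integral_exp_mul_sub_integral_le {S : Type*} [MeasurableSpace S] {ν : Measure S}
    [IsProbabilityMeasure ν] {u : S → ℝ} (hu : Measurable u) {H : ℝ} (huH : ∀ z, |u z| ≤ H)
    (l : ℝ) : ∫ z, exp (l * (u z - ∫ z, u z ∂ν)) ∂ν ≤ exp (H ^ 2 * l ^ 2 / 2) := by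
  have := (hasSubgaussianMGF_of_mem_Icc (μ := ν) hu.aemeasurable
    (ae_of_all _ fun z => Set.mem_Icc.2 (abs_le.1 (huH z)))).mgf_le l
  convert this using 3
  · rfl
  · push_cast
    rw [Real.norm_eq_abs, sub_neg_eq_add, ← two_mul, abs_mul, abs_two,
      mul_div_cancel_left₀ _ two_ne_zero, sq_abs]

namespace ProbabilityTheory.HasSubgaussianMGF

variable {Ω : Type*} [MeasurableSpace Ω] {μ : Measure Ω} [IsFiniteMeasure μ] {X : Ω → ℝ}
  {c : NNReal}

lemma measureReal_abs_ge_le (h : HasSubgaussianMGF X c μ) {ε : ℝ} (hε : 0 ≤ ε) :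
    μ.real {ω | ε ≤ |X ω|} ≤ 2 * exp (-ε ^ 2 / (2 * c)) := by
  have hsub : {ω | ε ≤ |X ω|} ⊆ {ω | ε ≤ X ω} ∪ {ω | ε ≤ (-X) ω} := fun ω hω => by
    rcases le_abs'.1 (show ε ≤ |X ω| from hω) with h | h
    · exact Or.inr (by simpa using le_neg_of_le_neg h)
    · exact Or.inl h
  calc μ.real {ω | ε ≤ |X ω|} ≤ μ.real {ω | ε ≤ X ω} + μ.real {ω | ε ≤ (-X) ω} :=
        (measureReal_mono hsub).trans (measureReal_union_le _ _)
    _ ≤ exp (-ε ^ 2 / (2 * c)) + exp (-ε ^ 2 / (2 * c)) :=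
        add_le_add (h.measure_ge_le hε) (h.neg.measure_ge_le hε)
    _ = 2 * exp (-ε ^ 2 / (2 * c)) := by ring

lemma measureReal_abs_ge_three_sqrt_log_le (h : HasSubgaussianMGF X c μ) (hc : 0 < c) {u : ℝ}
    (hu : 1 ≤ u) : μ.real {ω | 3 * sqrt (c * log u) ≤ |X ω|} ≤ 2 / u := by
  have hlog := log_nonneg hu
  have hc' : (0 : ℝ) < c := hc
  refine (h.measureReal_abs_ge_le (by positivity)).trans ?_
  calc 2 * exp (-(3 * sqrt (c * log u)) ^ 2 / (2 * c)) ≤ 2 * exp (-log u) := by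
        rw [mul_pow, sq_sqrt (by positivity)]
        gcongr
        rw [div_le_iff₀ (by positivity)]
        nlinarith
    _ = 2 / u := by rw [exp_neg, exp_log (by linarith), div_eq_mul_inv]

end ProbabilityTheory.HasSubgaussianMGF

lemma sum_range_mul_div_mod {β : Type*} [AddCommMonoid β] (f : ℕ → ℕ → β) (k n : ℕ) :
    ∑ t ∈ range (k * n), f (t / n) (t % n) = ∑ j ∈ range k, ∑ m ∈ range n, f j m := by
  induction k with
  | zero => simp
  | succ k ih =>
    rw [Nat.succ_mul, Finset.sum_range_add, ih, Finset.sum_range_succ]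
    congr 1
    refine Finset.sum_congr rfl fun m hm => ?_
    have hm := Finset.mem_range.1 hm
    rw [Nat.add_comm, Nat.add_mul_div_right _ _ (by omega), Nat.div_eq_of_lt hm, zero_add,
      Nat.add_mul_mod_self_right, Nat.mod_eq_of_lt hm]

lemma sum_range_sq_pow_sub_le {α : ℝ} (hα0 : 0 ≤ α) (hα1 : α < 1) (k : ℕ) :
    ∑ j ∈ range k, (α ^ (k - 1 - j)) ^ 2 ≤ 1 / (1 - α) := by
  rw [Finset.sum_range_reflect (fun j => (α ^ j) ^ 2) k]
  calc ∑ j ∈ range k, (α ^ j) ^ 2 = ∑ j ∈ Ico 0 k, (α ^ 2) ^ j := by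
        rw [Finset.range_eq_Ico]; simp_rw [← pow_mul, mul_comm]
    _ ≤ (α ^ 2) ^ 0 / (1 - α ^ 2) := geom_sum_Ico_le_of_lt_one (by positivity) (by nlinarith)
    _ ≤ 1 / (1 - α) := by rw [pow_zero]; gcongr; nlinarith

lemma abs_div_mul_sum_range_le {γ H : ℝ} (hγ : 0 ≤ γ) {M : ℕ} (hM : 1 ≤ M) {f : ℕ → ℝ}
    (hf : ∀ m, |f m| ≤ H) : |γ / M * ∑ m ∈ range M, f m| ≤ γ * H := by
  have hM0 : (0 : ℝ) < M := by exact_mod_cast hM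
  calc |γ / M * ∑ m ∈ range M, f m| ≤ γ / M * ∑ m ∈ range M, |f m| := by
        rw [abs_mul, abs_of_nonneg (by positivity)]
        exact mul_le_mul_of_nonneg_left (abs_sum_le_sum_abs _ _) (by positivity)
    _ ≤ γ / M * (M * H) := by
        gcongr
        simpa using Finset.sum_le_sum fun m (_ : m ∈ range M) => hf m
    _ = γ * H := by field_simp

lemma abs_ciSup_sub_mul_ciSup {A : Type*} [Finite A] [Nonempty A] (f g : A → ℝ) {α C : ℝ}
    (hα : 0 ≤ α) (h : ∀ a, |f a - α * g a| ≤ C) : |(⨆ a, f a) - α * ⨆ a, g a| ≤ C := by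
  obtain ⟨a₀, ha₀⟩ := Finite.exists_max g
  obtain ⟨a₁, ha₁⟩ := Finite.exists_max f
  have hg : (⨆ a, g a) = g a₀ :=
    le_antisymm (ciSup_le ha₀) (le_ciSup (Set.finite_range g).bddAbove a₀)
  have hf : (⨆ a, f a) = f a₁ :=
    le_antisymm (ciSup_le ha₁) (le_ciSup (Set.finite_range f).bddAbove a₁)
  rw [hf, hg, abs_le]
  have h₀ := abs_le.1 (h a₀)
  have h₁ := abs_le.1 (h a₁)
  constructor
  · linarith [ha₁ a₀]
  · linarith [mul_le_mul_of_nonneg_left (ha₀ a₁) hα]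

lemma mdpP_abs_le {S A : Type} [Fintype S] {P : S → A → S → ℝ} (hP : IsKernel P)
    {u : S → ℝ} {H : ℝ} (hu : ∀ z, |u z| ≤ H) (x : S) (a : A) : |mdpP P u x a| ≤ H := by
  calc |mdpP P u x a| ≤ ∑ z, P x a z * |u z| := by
        refine (Finset.abs_sum_le_sum_abs _ _).trans (Finset.sum_le_sum fun z _ => ?_)
        rw [abs_mul, abs_of_nonneg (hP.1 x a z)]
    _ ≤ ∑ z, P x a z * H :=
        Finset.sum_le_sum fun z _ => mul_le_mul_of_nonneg_left (hu z) (hP.1 x a z)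
    _ = H := by rw [← Finset.sum_mul, hP.2 x a, one_mul]

lemma measureReal_compl_forall_abs_lt_le {Ω S A : Type*} [MeasurableSpace Ω] {μ : Measure Ω}
    [IsFiniteMeasure μ] [Fintype S] [Fintype A] (K : ℕ) (E : ℕ → Ω → S → A → ℝ) {ε p : ℝ}
    (h : ∀ k ∈ Finset.Icc 1 K, ∀ x a, μ.real {ω | ε ≤ |E k ω x a|} ≤ p) :
    μ.real {ω | ∀ k ∈ Finset.Icc 1 K, ∀ x a, |E k ω x a| < ε}ᶜ
      ≤ K * Fintype.card S * Fintype.card A * p := by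
  set s := Finset.Icc 1 K ×ˢ (Finset.univ : Finset S) ×ˢ (Finset.univ : Finset A)
  have hcover : {ω | ∀ k ∈ Finset.Icc 1 K, ∀ x a, |E k ω x a| < ε}ᶜ
      ⊆ ⋃ q ∈ s, {ω | ε ≤ |E q.1 ω q.2.1 q.2.2|} := by
    intro ω hω
    simp only [Set.mem_compl_iff, Set.mem_ofPred_eq, not_forall, not_lt] at hω
    obtain ⟨k, hk, x, a, hka⟩ := hω
    exact Set.mem_biUnion (x := (k, x, a)) (Finset.mem_product.2 ⟨hk, by simp⟩) hka
  calc μ.real {ω | ∀ k ∈ Finset.Icc 1 K, ∀ x a, |E k ω x a| < ε}ᶜ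
      ≤ ∑ q ∈ s, μ.real {ω | ε ≤ |E q.1 ω q.2.1 q.2.2|} :=
        (measureReal_mono hcover (measure_ne_top _ _)).trans (measureReal_biUnion_finset_le _ _)
    _ ≤ ∑ _q ∈ s, p := Finset.sum_le_sum fun q hq =>
        h q.1 (Finset.mem_product.1 hq).1 q.2.1 q.2.2
    _ = K * Fintype.card S * Fintype.card A * p := by simp [s, Finset.card_product, mul_assoc]

namespace MDVI

variable {S A : Type} {Ω : Type*}

def samples (y : ℕ → ℕ → S → A → Ω → S) : ℕ × ℕ × S × A → Ω → S :=
  fun p => y p.1 p.2.1 p.2.2.1 p.2.2.2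

abbrev pastSigma [MeasurableSpace S] (y : ℕ → ℕ → S → A → Ω → S) (M k : ℕ) :
    MeasurableSpace Ω :=
  sampleSigma (samples y) {p | p.1 < k ∧ p.2.1 < M}

lemma pastSigma_mono [MeasurableSpace S] (y : ℕ → ℕ → S → A → Ω → S) (M : ℕ) :
    Monotone (pastSigma y M) :=
  fun _ _ hk => sampleSigma_mono fun _ hp => ⟨hp.1.trans_le hk, hp.2⟩

/-- The sample `y_{j,m,x,a}` with `m < M` is the `(j * M + m)`-th one. -/
def precedingSamples (M t : ℕ) : Set (ℕ × ℕ × S × A) :=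
  {p | p.2.1 < M ∧ p.1 * M + p.2.1 < t}

lemma precedingSamples_mono (M : ℕ) : Monotone (precedingSamples (S := S) (A := A) M) :=
  fun _ _ hst _ hp => ⟨hp.1, hp.2.trans_le hst⟩

lemma mem_precedingSamples_succ {M : ℕ} (hM : 1 ≤ M) (t : ℕ) (x : S) (a : A) :
    (t / M, t % M, x, a) ∈ precedingSamples M (t + 1) :=
  ⟨Nat.mod_lt _ (by omega), by simp only [Nat.div_add_mod']; omega⟩

lemma notMem_precedingSamples (M t : ℕ) (x : S) (a : A) :
    (t / M, t % M, x, a) ∉ precedingSamples M t := fun h => by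
  simp only [precedingSamples, Set.mem_ofPred_eq, Nat.div_add_mod'] at h
  omega

lemma pastSigma_le_sampleSigma_precedingSamples [MeasurableSpace S]
    (y : ℕ → ℕ → S → A → Ω → S) (M t : ℕ) :
    pastSigma y M (t / M) ≤ sampleSigma (samples y) (precedingSamples M t) :=
  sampleSigma_mono fun p hp => ⟨hp.2, by
    have := Nat.mul_le_mul_right M (hp.1 : p.1 + 1 ≤ t / M)
    have := Nat.div_mul_le_self t M
    nlinarith [hp.2]⟩

variable {w v : ℕ → Ω → S → ℝ} {sq qv : ℕ → Ω → S → A → ℝ} {α : ℝ}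

lemma w_eq_iSup [Nonempty A] (hs0 : ∀ ω x a, sq 0 ω x a = 0) (hw0 : ∀ ω x, w 0 ω x = 0)
    (hwk : ∀ ω k x, w (k + 1) ω x = ⨆ a, sq (k + 1) ω x a) (k : ℕ) (ω : Ω) (x : S) :
    w k ω x = ⨆ a, sq k ω x a := by
  cases k with
  | zero => simp [hw0, hs0]
  | succ k => exact hwk ω k x

lemma abs_v_le [Finite A] [Nonempty A] {r : S → A → ℝ} (hr : ∀ x a, |r x a| ≤ 1)
    {γ H : ℝ} (hγ0 : 0 ≤ γ) (hH : 1 + γ * H = H) (hH0 : 0 ≤ H) (hα0 : 0 ≤ α) {M : ℕ}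
    (hM : 1 ≤ M) {y : ℕ → ℕ → S → A → Ω → S}
    (hw0 : ∀ ω x, w 0 ω x = 0) (hw : ∀ k ω x, w k ω x = ⨆ a, sq k ω x a)
    (hv : ∀ ω k x, v k ω x = w k ω x - α * w (k - 1) ω x)
    (hqv : ∀ ω k x a, qv (k + 1) ω x a
      = r x a + (γ / (M : ℝ)) * ∑ m ∈ Finset.range M, v k ω (y k m x a ω))
    (hsq : ∀ ω k x a, sq (k + 1) ω x a = qv (k + 1) ω x a + α * sq k ω x a) :
    ∀ k ω z, |v k ω z| ≤ H := by
  intro k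
  induction k with
  | zero => intro ω z; simpa [hv, hw0] using hH0
  | succ k ih =>
    intro ω z
    rw [hv, hw, hw, Nat.add_sub_cancel]
    refine abs_ciSup_sub_mul_ciSup _ _ hα0 fun a => ?_
    rw [hsq, hqv, add_sub_cancel_right, ← hH]
    exact (abs_add_le _ _).trans (add_le_add (hr z a)
      (abs_div_mul_sum_range_le hγ0 hM fun m => ih ω _))

lemma measurable_v_of_sq [Countable A] {m : MeasurableSpace Ω}
    (hw : ∀ k ω x, w k ω x = ⨆ a, sq k ω x a)
    (hv : ∀ ω k x, v k ω x = w k ω x - α * w (k - 1) ω x) {k : ℕ} {z : S}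
    (hk : ∀ a, Measurable[m] (sq k · z a)) (hk' : ∀ a, Measurable[m] (sq (k - 1) · z a)) :
    Measurable[m] (v k · z) := by
  simp_rw [hv, hw]
  exact (Measurable.iSup hk).sub ((Measurable.iSup hk').const_mul α)

lemma measurable_sq [MeasurableSpace S] [MeasurableSingletonClass S] [Countable S]
    [Countable A] {r : S → A → ℝ} {γ : ℝ} {M : ℕ} {y : ℕ → ℕ → S → A → Ω → S}
    (hs0 : ∀ ω x a, sq 0 ω x a = 0) (hw : ∀ k ω x, w k ω x = ⨆ a, sq k ω x a)
    (hv : ∀ ω k x, v k ω x = w k ω x - α * w (k - 1) ω x)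
    (hqv : ∀ ω k x a, qv (k + 1) ω x a
      = r x a + (γ / (M : ℝ)) * ∑ m ∈ Finset.range M, v k ω (y k m x a ω))
    (hsq : ∀ ω k x a, sq (k + 1) ω x a = qv (k + 1) ω x a + α * sq k ω x a) (k : ℕ) (x : S)
    (a : A) : Measurable[pastSigma y M k] (sq k · x a) := by
  induction k using Nat.strong_induction_on generalizing x a with
  | _ k ih =>
    cases k with
    | zero => simp_rw [hs0]; exact measurable_const
    | succ k =>
      have hle := pastSigma_mono y M
      have hvk : ∀ z, Measurable[pastSigma y M (k + 1)] (v k · z) := fun z =>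
        measurable_v_of_sq hw hv
          (fun b => (ih k k.lt_succ_self z b).mono (hle k.le_succ) le_rfl)
          (fun b => (ih (k - 1) (by omega) z b).mono (hle (by omega)) le_rfl)
      have hy : ∀ m ∈ range M, Measurable[pastSigma y M (k + 1)] (y k m x a) := fun m hm =>
        measurable_sampleSigma (Y := samples y) (i := (k, m, x, a))
          ⟨k.lt_succ_self, Finset.mem_range.1 hm⟩
      simp_rw [hsq, hqv]
      exact (measurable_const.add (measurable_const.mul (Finset.measurable_sum _ fun m hm =>
        Measurable.apply_of_countable hvk (hy m hm)))).add
        (measurable_const.mul ((ih k k.lt_succ_self x a).mono (hle k.le_succ) le_rfl))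

lemma measurable_v [MeasurableSpace S] [MeasurableSingletonClass S] [Countable S]
    [Countable A] {r : S → A → ℝ} {γ : ℝ} {M : ℕ} {y : ℕ → ℕ → S → A → Ω → S}
    (hs0 : ∀ ω x a, sq 0 ω x a = 0) (hw : ∀ k ω x, w k ω x = ⨆ a, sq k ω x a)
    (hv : ∀ ω k x, v k ω x = w k ω x - α * w (k - 1) ω x)
    (hqv : ∀ ω k x a, qv (k + 1) ω x a
      = r x a + (γ / (M : ℝ)) * ∑ m ∈ Finset.range M, v k ω (y k m x a ω))
    (hsq : ∀ ω k x a, sq (k + 1) ω x a = qv (k + 1) ω x a + α * sq k ω x a) (k : ℕ) (z : S) :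
    Measurable[pastSigma y M k] (v k · z) :=
  measurable_v_of_sq hw hv (measurable_sq hs0 hw hv hqv hsq k z) fun a =>
    (measurable_sq hs0 hw hv hqv hsq (k - 1) z a).mono (pastSigma_mono y M (Nat.sub_le k 1)) le_rfl

def centeredValue [Fintype S] (P : S → A → S → ℝ) (v : ℕ → Ω → S → ℝ) (x : S) (a : A)
    (j : ℕ) (z : S) (ω : Ω) : ℝ :=
  v j ω z - mdpP P (v j ω) x a

lemma mul_Ef_eq_sum [Fintype S] {P : S → A → S → ℝ} {γ : ℝ} {M : ℕ} (hM : 1 ≤ M)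
    {y : ℕ → ℕ → S → A → Ω → S} {εf Ef : ℕ → Ω → S → A → ℝ}
    (hεf : ∀ ω k x a, εf (k + 1) ω x a
      = (γ / (M : ℝ)) * ∑ m ∈ Finset.range M, v k ω (y k m x a ω) - γ * mdpP P (v k ω) x a)
    (hEf : ∀ ω k x a, Ef k ω x a = ∑ j ∈ Finset.range k, α ^ (k - 1 - j) * εf (j + 1) ω x a)
    (k : ℕ) (ω : Ω) (x : S) (a : A) (l : ℝ) :
    l * Ef k ω x a = ∑ t ∈ range (k * M), l * α ^ (k - 1 - t / M) * γ / M *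
      centeredValue P v x a (t / M) (y (t / M) (t % M) x a ω) ω := by
  have hM0 : (M : ℝ) ≠ 0 := by positivity
  rw [sum_range_mul_div_mod (fun j m => l * α ^ (k - 1 - j) * γ / M *
    centeredValue P v x a j (y j m x a ω) ω), hEf, Finset.mul_sum]
  refine Finset.sum_congr rfl fun j _ => ?_
  rw [hεf, ← Finset.mul_sum]
  simp only [centeredValue, Finset.sum_sub_distrib, Finset.sum_const, Finset.card_range,
    nsmul_eq_mul]
  field_simp

lemma sum_variance_proxy_le {γ H : ℝ} (hγ0 : 0 ≤ γ) (hγ1 : γ ≤ 1) (hα0 : 0 ≤ α) (hα1 : α < 1)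
    {M : ℕ} (hM : 1 ≤ M) (k : ℕ) (l : ℝ) :
    ∑ t ∈ range (k * M), H ^ 2 * (l * α ^ (k - 1 - t / M) * γ / M) ^ 2 / 2
      ≤ H ^ 2 / ((1 - α) * M) * l ^ 2 / 2 := by
  have hM0 : (0 : ℝ) < M := by exact_mod_cast hM
  rw [sum_range_mul_div_mod (fun j _ => H ^ 2 * (l * α ^ (k - 1 - j) * γ / M) ^ 2 / 2)]
  calc ∑ j ∈ range k, ∑ _m ∈ range M, H ^ 2 * (l * α ^ (k - 1 - j) * γ / M) ^ 2 / 2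
      = H ^ 2 * l ^ 2 * γ ^ 2 / (2 * M) * ∑ j ∈ range k, (α ^ (k - 1 - j)) ^ 2 := by
        simp only [Finset.sum_const, Finset.card_range, nsmul_eq_mul, Finset.mul_sum]
        refine Finset.sum_congr rfl fun j _ => ?_
        field_simp
    _ ≤ H ^ 2 * l ^ 2 * 1 / (2 * M) * (1 / (1 - α)) := by
        gcongr
        · nlinarith
        · exact sum_range_sq_pow_sub_le hα0 hα1 k
    _ = H ^ 2 / ((1 - α) * M) * l ^ 2 / 2 := by field_simp

lemma hasSubgaussianMGF_Ef [Fintype S] [MeasurableSpace S] [MeasurableSingletonClass S]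
    [MeasurableSpace Ω] {μ : Measure Ω} [IsProbabilityMeasure μ] {P : S → A → S → ℝ}
    (hP : IsKernel P) {γ H : ℝ} (hγ0 : 0 ≤ γ) (hγ1 : γ ≤ 1) (hα0 : 0 ≤ α) (hα1 : α < 1)
    {M : ℕ} (hM : 1 ≤ M) {y : ℕ → ℕ → S → A → Ω → S}
    (hymeas : ∀ k m x a, Measurable (y k m x a))
    (hydist : ∀ k m x a z, μ {ω | y k m x a ω = z} = ENNReal.ofReal (P x a z))
    (hyind : iIndepFun (samples y) μ)
    (hvH : ∀ k ω z, |v k ω z| ≤ H) (hvm : ∀ k z, Measurable[pastSigma y M k] (v k · z))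
    {εf Ef : ℕ → Ω → S → A → ℝ}
    (hεf : ∀ ω k x a, εf (k + 1) ω x a
      = (γ / (M : ℝ)) * ∑ m ∈ Finset.range M, v k ω (y k m x a ω) - γ * mdpP P (v k ω) x a)
    (hEf : ∀ ω k x a, Ef k ω x a = ∑ j ∈ Finset.range k, α ^ (k - 1 - j) * εf (j + 1) ω x a)
    (k : ℕ) (x : S) (a : A) :
    HasSubgaussianMGF (fun ω => Ef k ω x a) (H ^ 2 / ((1 - α) * M)).toNNReal μ := by
  have hY : ∀ p, Measurable (samples y p) := fun p => hymeas _ _ _ _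
  set T : ℕ → Set (ℕ × ℕ × S × A) := precedingSamples M
  set i : ℕ → ℕ × ℕ × S × A := fun t => (t / M, t % M, x, a)
  set D : ℝ → ℕ → S → Ω → ℝ := fun l t z ω =>
    l * α ^ (k - 1 - t / M) * γ / M * centeredValue P v x a (t / M) z ω
  have hD : ∀ l t z, Measurable[sampleSigma (samples y) (T t)] (D l t z) := fun l t z =>
    (((hvm _ z).sub (Finset.measurable_sum _ fun z' _ => (hvm _ z').const_mul _)).mono
      (pastSigma_le_sampleSigma_precedingSamples y M t) le_rfl).const_mul _
  have hDC : ∀ l t z ω, D l t z ω ≤ |l * α ^ (k - 1 - t / M) * γ / M| * (2 * H) :=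
    fun l t z ω => (le_abs_self _).trans <| by
      rw [abs_mul]
      gcongr
      exact (abs_sub _ _).trans (by linarith [hvH (t / M) ω z, mdpP_abs_le hP (hvH (t / M) ω) x a])
  have hEf_eq : ∀ l ω, l * Ef k ω x a = ∑ t ∈ range (k * M), D l t (samples y (i t) ω) ω :=
    fun l ω => mul_Ef_eq_sum hM hεf hEf k ω x a l
  have hiT : ∀ t, i t ∈ T (t + 1) := (mem_precedingSamples_succ hM · x a)
  refine ⟨fun l => ?_, fun l => ?_⟩
  · simp_rw [hEf_eq]
    exact integrable_exp_of_le ((measurable_sum_fresh (precedingSamples_mono M) hiT (hD l)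
      _).mono (sampleSigma_le hY _) le_rfl)
      fun ω => Finset.sum_le_sum fun t _ => hDC l t _ ω
  · have hc : 0 ≤ H ^ 2 / ((1 - α) * M) :=
      div_nonneg (sq_nonneg H) (mul_nonneg (by linarith) (Nat.cast_nonneg M))
    rw [mgf, Real.coe_toNNReal _ hc]
    simp_rw [hEf_eq]
    refine (integral_exp_sum_fresh_le hY hyind (precedingSamples_mono M) hiT
      (notMem_precedingSamples M · x a) (hD l) (hDC l) (fun t ω => ?_) _).trans
      (exp_le_exp.2 (sum_variance_proxy_le hγ0 hγ1 hα0 hα1 hM k l))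
    have := Measure.isProbabilityMeasure_map (μ := μ) (hY (i t)).aemeasurable
    have hhoeff := integral_exp_mul_sub_integral_le (ν := μ.map (samples y (i t)))
      (measurable_of_countable (v (t / M) ω)) (hvH (t / M) ω) (l * α ^ (k - 1 - t / M) * γ / M)
    rw [integral_map_eq_sum (hY _) (hP.1 x a) (hydist _ _ x a) (v (t / M) ω)] at hhoeff
    exact hhoeff

end MDVI


theorem mdvi_hoeffding_bound_Ek_general
    (S A : Type) [Fintype S] [Fintype A] [Nonempty A]
    [MeasurableSpace S] [MeasurableSingletonClass S]
    (P : S → A → S → ℝ) (hP : IsKernel P)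
    (r : S → A → ℝ) (hr : ∀ x a, |r x a| ≤ 1)
    (γ H : ℝ) (hγ0 : 0 ≤ γ) (hγ1 : γ < 1) (hH : H = 1 / (1 - γ))
    (Ω : Type) [MeasurableSpace Ω] (μ : Measure Ω) [IsProbabilityMeasure μ]
    (y : ℕ → ℕ → S → A → Ω → S)
    (hymeas : ∀ k m x a, Measurable (y k m x a))
    (hydist : ∀ k m x a z, μ {ω | y k m x a ω = z} = ENNReal.ofReal (P x a z))
    (hyind : iIndepFun (β := fun _ : ℕ × ℕ × S × A => S)
      (fun p => y p.1 p.2.1 p.2.2.1 p.2.2.2) μ)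
    (α : ℝ) (hα0 : 0 ≤ α) (hα1 : α < 1) (K M : ℕ) (hM : 1 ≤ M)
    (w v : ℕ → Ω → S → ℝ) (sq qv : ℕ → Ω → S → A → ℝ)
    (hs0 : ∀ ω x a, sq 0 ω x a = 0)
    (hw0 : ∀ ω x, w 0 ω x = 0)
    (hv : ∀ ω k x, v k ω x = w k ω x - α * w (k - 1) ω x)
    (hqv : ∀ ω k x a, qv (k + 1) ω x a
      = r x a + (γ / (M : ℝ)) * ∑ m ∈ Finset.range M, v k ω (y k m x a ω))
    (hsq : ∀ ω k x a, sq (k + 1) ω x a = qv (k + 1) ω x a + α * sq k ω x a)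
    (hwk : ∀ ω k x, w (k + 1) ω x = ⨆ a, sq (k + 1) ω x a)
    (εf Ef : ℕ → Ω → S → A → ℝ)
    (hεf : ∀ ω k x a, εf (k + 1) ω x a
      = (γ / (M : ℝ)) * ∑ m ∈ Finset.range M, v k ω (y k m x a ω) - γ * mdpP P (v k ω) x a)
    (hEf : ∀ ω k x a, Ef k ω x a = ∑ j ∈ Finset.range k, α ^ (k - 1 - j) * εf (j + 1) ω x a)
    (δ : ℝ) (hδ0 : 0 < δ) (hδ1 : δ < 1) :
    μ ({ω | ∀ k ∈ Finset.Icc 1 K, ∀ x a, |Ef k ω x a|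
        < 3 * H * Real.sqrt ((1 / (1 - α)) *
          Real.log ((8 * K * Fintype.card S * Fintype.card A : ℝ) / δ) / (M : ℝ))}ᶜ)
      ≤ ENNReal.ofReal (δ / 4) := by
  have hH0 : 0 < H := by rw [hH]; exact one_div_pos.2 (by linarith)
  have hHrec : 1 + γ * H = H := by
    have : 1 - γ ≠ 0 := by linarith
    rw [hH]; field_simp; ring
  have hw := MDVI.w_eq_iSup hs0 hw0 hwk
  have hsub := MDVI.hasSubgaussianMGF_Ef hP hγ0 hγ1.le hα0 hα1 hM hymeas hydist hyind
    (MDVI.abs_v_le hr hγ0 hHrec hH0.le hα0 hM hw0 hw hv hqv hsq)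
    (MDVI.measurable_v hs0 hw hv hqv hsq) hεf hEf
  set u : ℝ := (8 * K * Fintype.card S * Fintype.card A : ℝ) / δ
  set c : NNReal := (H ^ 2 / ((1 - α) * M)).toNNReal
  have hc : (c : ℝ) = H ^ 2 / ((1 - α) * M) := Real.coe_toNNReal _ (by positivity)
  have hε : 3 * H * sqrt ((1 / (1 - α)) * log u / M) = 3 * sqrt (c * log u) := by
    rw [hc, show H ^ 2 / ((1 - α) * M) * log u = H ^ 2 * ((1 / (1 - α)) * log u / M) by
      field_simp, sqrt_mul (sq_nonneg H), sqrt_sq hH0.le, mul_assoc]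
  rw [hε, ENNReal.le_ofReal_iff_toReal_le (measure_ne_top _ _) (by positivity)]
  refine (measureReal_compl_forall_abs_lt_le (p := 2 / u) K Ef fun k hk x a => ?_).trans ?_
  · have hn : (1 : ℝ) ≤ K * Fintype.card S * Fintype.card A := by
      have hK : 0 < K := by have := Finset.mem_Icc.1 hk; omega
      exact_mod_cast Nat.mul_pos (Nat.mul_pos hK (Fintype.card_pos_iff.2 ⟨x⟩)) Fintype.card_pos
    have hu : 1 ≤ u := (one_le_div hδ0).2 (by linarith)
    exact (hsub k x a).measureReal_abs_ge_three_sqrt_log_le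
      (Real.toNNReal_pos.2 (by positivity)) hu
  · set n : ℝ := K * Fintype.card S * Fintype.card A
    rcases (show 0 ≤ n by positivity).eq_or_lt with hn | hn
    · rw [← hn, zero_mul]; positivity
    · rw [show u = 8 * n / δ by simp only [u, n]; ring]
      field_simp
      norm_num

/-- Lemma 4.2: Hoeffding bound on the averaged errors `E_k`. -/
theorem mdvi_hoeffding_bound_Ek
    (S A : Type) [Fintype S] [Fintype A] [Nonempty S] [Nonempty A]
    [MeasurableSpace S] [MeasurableSingletonClass S]
    (P : S → A → S → ℝ) (hP : IsKernel P)
    (r : S → A → ℝ) (hr : ∀ x a, |r x a| ≤ 1)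
    (γ H : ℝ) (hγ0 : 0 ≤ γ) (hγ1 : γ < 1) (hH : H = 1 / (1 - γ))
    (Ω : Type) [MeasurableSpace Ω] (μ : Measure Ω) [IsProbabilityMeasure μ]
    (y : ℕ → ℕ → S → A → Ω → S)
    (hymeas : ∀ k m x a, Measurable (y k m x a))
    (hydist : ∀ k m x a z, μ {ω | y k m x a ω = z} = ENNReal.ofReal (P x a z))
    (hyind : iIndepFun (β := fun _ : ℕ × ℕ × S × A => S)
      (fun p => y p.1 p.2.1 p.2.2.1 p.2.2.2) μ)
    (α : ℝ) (hα0 : 0 ≤ α) (hα1 : α < 1) (K M : ℕ) (hM : 1 ≤ M)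
    (w v : ℕ → Ω → S → ℝ) (sq qv : ℕ → Ω → S → A → ℝ)
    (hs0 : ∀ ω x a, sq 0 ω x a = 0)
    (hw0 : ∀ ω x, w 0 ω x = 0)
    (hv : ∀ ω k x, v k ω x = w k ω x - α * w (k - 1) ω x)
    (hqv : ∀ ω k x a, qv (k + 1) ω x a
      = r x a + (γ / (M : ℝ)) * ∑ m ∈ Finset.range M, v k ω (y k m x a ω))
    (hsq : ∀ ω k x a, sq (k + 1) ω x a = qv (k + 1) ω x a + α * sq k ω x a)
    (hwk : ∀ ω k x, w (k + 1) ω x = ⨆ a, sq (k + 1) ω x a)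
    (εf Ef : ℕ → Ω → S → A → ℝ)
    (hεf : ∀ ω k x a, εf (k + 1) ω x a
      = (γ / (M : ℝ)) * ∑ m ∈ Finset.range M, v k ω (y k m x a ω) - γ * mdpP P (v k ω) x a)
    (hEf : ∀ ω k x a, Ef k ω x a = ∑ j ∈ Finset.range k, α ^ (k - 1 - j) * εf (j + 1) ω x a)
    (δ : ℝ) (hδ0 : 0 < δ) (hδ1 : δ < 1) :
    μ ({ω | ∀ k ∈ Finset.Icc 1 K, ∀ x a, |Ef k ω x a|
        < 3 * H * Real.sqrt ((1 / (1 - α)) *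
          Real.log ((8 * K * Fintype.card S * Fintype.card A : ℝ) / δ) / (M : ℝ))}ᶜ)
      ≤ ENNReal.ofReal (δ / 4) :=
  mdvi_hoeffding_bound_Ek_general S A P hP r hr γ H hγ0 hγ1 hH Ω μ y hymeas hydist hyind α hα0 hα1 K
    M hM w v sq qv hs0 hw0 hv hqv hsq hwk εf Ef hεf hEf δ hδ0 hδ1
end
end
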